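/- Assume M has no duplicate literals. Clauses S and M are the side and main premise of subsumption resolution if and only if the indirect SAT encoding 𝓔ⁱ_SR(S,M) is satisfiable, where 𝓔ⁱ_SR uses additional Boolean variables cⱼ and is the conjunction of: positive and negative compatibility, structurality (cⱼ ↔ ⋁ᵢ b⁻ᵢⱼ for each j), revised existence (⋁ⱼ cⱼ), revised uniqueness (at most one cⱼ is true), completeness (⋀ᵢ ⋁ⱼ (b⁺ᵢⱼ ∨ b⁻ᵢⱼ)), and revised coherence (for all i, j: ¬cⱼ ∨ ¬b⁺ᵢⱼ). -/

import Mathlib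

/-- First-order terms over variables `V`. -/
inductive Trm (V : Type) : Type
  | var : V → Trm V
  | fn : ℕ → Trm V
  | app : Trm V → Trm V → Trm V
deriving DecidableEq

/-- Applying a (total) substitution to a term. -/
def Trm.subst {V : Type} (σ : V → Trm V) : Trm V → Trm V
  | .var x => σ x
  | .fn f => .fn f
  | .app t u => .app (t.subst σ) (u.subst σ)

/-- A first-order literal: a polarity, a predicate symbol and an argument term. -/
structure Lit (V : Type) where
  pos : Bool
  pred : ℕ
  arg : Trm V
deriving DecidableEq

/-- The complement of a literal. -/
def Lit.neg {V : Type} (l : Lit V) : Lit V := { l with pos := !l.pos }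

/-- Applying a substitution to a literal. -/
def Lit.subst {V : Type} (σ : V → Trm V) (l : Lit V) : Lit V :=
  { l with arg := l.arg.subst σ }

/-- A clause is a multiset of literals. -/
abbrev Clause (V : Type) := Multiset (Lit V)

/-- Applying a substitution to a clause. -/
def Clause.subst {V : Type} (σ : V → Trm V) (C : Clause V) : Clause V :=
  C.map (Lit.subst σ)

/-- `S` subsumes `M`: some substitution maps `S` to a sub-multiset of `M`. -/
def Subsumes {V : Type} (S M : Clause V) : Prop :=
  ∃ σ : V → Trm V, Clause.subst σ S ≤ M

/-- `S` and `M` are side and main premises of subsumption resolution: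
there are `σ`, a nonempty `S' ⊆ S` and `m' ∈ M` with `σ(S') = {¬m'}` and
`σ(S \ S') ⊆ M \ {m'}`. -/
def SubRes {V : Type} [DecidableEq V] (S M : Clause V) : Prop :=
  ∃ (σ : V → Trm V) (S' : Clause V) (m' : Lit V),
    S' ≤ S ∧ S' ≠ 0 ∧ m' ∈ M ∧
    (∀ l ∈ S', Lit.subst σ l = m'.neg) ∧
    (∀ l ∈ S - S', Lit.subst σ l ∈ M.erase m')

/-- Partial substitutions. -/
abbrev PSub (V : Type) := V → Option (Trm V)

/-- Partial application of a partial substitution to a term. -/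
def Trm.psubst {V : Type} (θ : PSub V) : Trm V → Option (Trm V)
  | .var x => θ x
  | .fn f => some (.fn f)
  | .app t u => (t.psubst θ).bind fun t' => (u.psubst θ).map fun u' => .app t' u'

/-- Partial application of a partial substitution to a literal. -/
def Lit.psubst {V : Type} (θ : PSub V) (l : Lit V) : Option (Lit V) :=
  (l.arg.psubst θ).map fun t => { l with arg := t }

/-- `θ ⊆ σ`: the total substitution `σ` extends the partial substitution `θ`. -/
def PSub.le {V : Type} (θ : PSub V) (σ : V → Trm V) : Prop :=
  ∀ x t, θ x = some t → σ x = t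

/-- The clause with literals `s 0, …, s (k-1)`. -/
def clauseOfFn {V : Type} {k : ℕ} (s : Fin k → Lit V) : Clause V :=
  (List.ofFn s : List (Lit V))

/-- The indexed clause `m` has no duplicate literals. -/
def NoDupIdx {V : Type} {n : ℕ} (m : Fin n → Lit V) : Prop :=
  ∀ j j' : Fin n, m j = m j' → j = j'

/-- The indexed clause `m` has no duplicate atoms: no two (distinct) literals are
equal or complementary. -/
def NoDupAtomsIdx {V : Type} {n : ℕ} (m : Fin n → Lit V) : Prop :=
  (∀ j j' : Fin n, m j = m j' → j = j') ∧ (∀ j j' : Fin n, m j ≠ (m j').neg)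

/-- `Sp` is the family of positive matchers `Σ⁺ᵢⱼ`: `Sp i j = some θ` exactly when a
substitution matching `sᵢ` to `mⱼ` exists, in which case `θ` is such a (partial)
matcher and every total match is an extension of it. -/
def IsMatcherFamilyPos {V : Type} {k n : ℕ} (s : Fin k → Lit V) (m : Fin n → Lit V)
    (Sp : Fin k → Fin n → Option (PSub V)) : Prop :=
  (∀ i j θ, Sp i j = some θ → Lit.psubst θ (s i) = some (m j)) ∧
  (∀ i j (σ : V → Trm V), Lit.subst σ (s i) = m j → ∃ θ, Sp i j = some θ ∧ PSub.le θ σ)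

/-- `Sn` is the family of negative matchers `Σ⁻ᵢⱼ` (matching `sᵢ` to `¬mⱼ`). -/
def IsMatcherFamilyNeg {V : Type} {k n : ℕ} (s : Fin k → Lit V) (m : Fin n → Lit V)
    (Sn : Fin k → Fin n → Option (PSub V)) : Prop :=
  (∀ i j θ, Sn i j = some θ → Lit.psubst θ (s i) = some ((m j).neg)) ∧
  (∀ i j (σ : V → Trm V), Lit.subst σ (s i) = (m j).neg → ∃ θ, Sn i j = some θ ∧ PSub.le θ σ)

/-- The (predicate, polarity) header of a literal. -/
def Lit.header {V : Type} (l : Lit V) : ℕ × Bool := (l.pred, l.pos)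

/-- Satisfiability of the indirect SAT encoding `𝓔ⁱ_SR(S,M)` of subsumption resolution. -/
def IndirectSRSat {V : Type} {k n : ℕ} (s : Fin k → Lit V) (m : Fin n → Lit V)
    (Sp Sn : Fin k → Fin n → Option (PSub V)) : Prop :=
  ∃ (σ : V → Trm V) (bp bn : Fin k → Fin n → Bool) (c : Fin n → Bool),
    -- positive compatibility
    (∀ i j, bp i j = true → ∃ θ, Sp i j = some θ ∧ PSub.le θ σ) ∧
    -- negative compatibility
    (∀ i j, bn i j = true → ∃ θ, Sn i j = some θ ∧ PSub.le θ σ) ∧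
    -- structurality
    (∀ j, c j = true ↔ ∃ i, bn i j = true) ∧
    -- revised existence
    (∃ j, c j = true) ∧
    -- revised uniqueness
    (∀ j j', c j = true → c j' = true → j = j') ∧
    -- completeness
    (∀ i, ∃ j, bp i j = true ∨ bn i j = true) ∧
    -- revised coherence
    (∀ i j, ¬(c j = true ∧ bp i j = true))

/-!
Both the premise pair and a model of the encoding amount to a substitution `σ` and an index
`j₀` such that every `σ(sᵢ)` is either `¬m_{j₀}` or some `mⱼ` with `j ≠ j₀`, and at least one
`σ(sᵢ)` is `¬m_{j₀}`. For subsumption resolution, `S'` is the set of literals sent to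
`¬m_{j₀}`; for the encoding, `cⱼ` marks `j₀` and `b⁻ᵢⱼ`, `b⁺ᵢⱼ` record which case each `sᵢ`
is in. The matcher families make compatibility with `σ` the same as being matched by `σ`, and
since `M` has no duplicate literals, `σ(sᵢ) ∈ M \ {m_{j₀}}` means `σ(sᵢ) = mⱼ` for some `j ≠ j₀`.
-/

theorem Trm.subst_eq_of_psubst_eq_some {V : Type} {θ : PSub V} {σ : V → Trm V}
    (h : PSub.le θ σ) : ∀ {t t' : Trm V}, t.psubst θ = some t' → t.subst σ = t'
  | .var x, _, ht => h x _ ht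
  | .fn _, _, ht => by
      simp only [Trm.psubst, Option.some.injEq] at ht
      simp [Trm.subst, ht]
  | .app t u, _, ht => by
      simp only [Trm.psubst, Option.bind_eq_some_iff, Option.map_eq_some_iff] at ht
      obtain ⟨a, ha, b, hb, rfl⟩ := ht
      simp [Trm.subst, subst_eq_of_psubst_eq_some h ha, subst_eq_of_psubst_eq_some h hb]

theorem Lit.subst_eq_of_psubst_eq_some {V : Type} {θ : PSub V} {σ : V → Trm V}
    (h : PSub.le θ σ) {l l' : Lit V} (hl : l.psubst θ = some l') : l.subst σ = l' := by
  simp only [Lit.psubst, Option.map_eq_some_iff] at hl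
  obtain ⟨t, ht, rfl⟩ := hl
  simp [Lit.subst, Trm.subst_eq_of_psubst_eq_some h ht]

section Matchers

variable {V : Type} {k n : ℕ} {s : Fin k → Lit V} {m : Fin n → Lit V} {σ : V → Trm V}

theorem IsMatcherFamilyPos.compatible_iff {Sp : Fin k → Fin n → Option (PSub V)}
    (hSp : IsMatcherFamilyPos s m Sp) (i : Fin k) (j : Fin n) :
    (∃ θ, Sp i j = some θ ∧ PSub.le θ σ) ↔ (s i).subst σ = m j :=
  ⟨fun ⟨θ, hθ, hle⟩ => Lit.subst_eq_of_psubst_eq_some hle (hSp.1 i j θ hθ), hSp.2 i j σ⟩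

theorem IsMatcherFamilyNeg.compatible_iff {Sn : Fin k → Fin n → Option (PSub V)}
    (hSn : IsMatcherFamilyNeg s m Sn) (i : Fin k) (j : Fin n) :
    (∃ θ, Sn i j = some θ ∧ PSub.le θ σ) ↔ (s i).subst σ = (m j).neg :=
  ⟨fun ⟨θ, hθ, hle⟩ => Lit.subst_eq_of_psubst_eq_some hle (hSn.1 i j θ hθ), hSn.2 i j σ⟩

end Matchers

theorem subRes_iff_exists_subst {V : Type} [DecidableEq V] {S M : Clause V} :
    SubRes S M ↔ ∃ (σ : V → Trm V) (m' : Lit V), m' ∈ M ∧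
      (∃ l ∈ S, l.subst σ = m'.neg) ∧ ∀ l ∈ S, l.subst σ = m'.neg ∨ l.subst σ ∈ M.erase m' := by
  constructor
  · rintro ⟨σ, S', m', hS'S, hS'ne, hm', hS', hrest⟩
    obtain ⟨l₀, hl₀⟩ := Multiset.exists_mem_of_ne_zero hS'ne
    refine ⟨σ, m', hm', ⟨l₀, Multiset.mem_of_le hS'S hl₀, hS' l₀ hl₀⟩, fun l hl => ?_⟩
    rw [← tsub_add_cancel_of_le hS'S, Multiset.mem_add] at hl
    exact (hl.imp (hrest l) (hS' l)).symm
  · rintro ⟨σ, m', hm', ⟨l₀, hl₀S, hl₀⟩, hS⟩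
    let P : Lit V → Prop := fun l => l.subst σ = m'.neg
    have hrest : S - S.filter P = S.filter (fun l => ¬P l) :=
      tsub_eq_of_eq_add_rev (Multiset.filter_add_not P S).symm
    refine ⟨σ, S.filter P, m', Multiset.filter_le _ _,
      ne_of_mem_of_not_mem' (Multiset.mem_filter.2 ⟨hl₀S, hl₀⟩) (Multiset.notMem_zero _), hm',
      fun l hl => (Multiset.mem_filter.1 hl).2, fun l hl => ?_⟩
    rw [hrest, Multiset.mem_filter] at hl
    exact (hS l hl.1).resolve_left hl.2

theorem mem_clauseOfFn {V : Type} {k : ℕ} {s : Fin k → Lit V} {l : Lit V} :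
    l ∈ clauseOfFn s ↔ ∃ i, s i = l := by
  simp [clauseOfFn, List.mem_ofFn]

theorem nodup_clauseOfFn {V : Type} {k : ℕ} {s : Fin k → Lit V} (hs : NoDupIdx s) :
    (clauseOfFn s).Nodup :=
  Multiset.coe_nodup.2 (List.nodup_ofFn.2 hs)

theorem mem_erase_clauseOfFn_iff {V : Type} [DecidableEq V] {n : ℕ} {m : Fin n → Lit V}
    (hm : NoDupIdx m) (l : Lit V) (j₀ : Fin n) :
    l ∈ (clauseOfFn m).erase (m j₀) ↔ ∃ j ≠ j₀, l = m j := by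
  rw [(nodup_clauseOfFn hm).mem_erase_iff, mem_clauseOfFn]
  constructor
  · rintro ⟨hne, j, rfl⟩
    exact ⟨j, fun h => hne (congrArg m h), rfl⟩
  · rintro ⟨j, hj, rfl⟩
    exact ⟨fun h => hj (hm j j₀ h), j, rfl⟩

def ResolvesAt {V : Type} {k n : ℕ} (s : Fin k → Lit V) (m : Fin n → Lit V)
    (σ : V → Trm V) (j₀ : Fin n) : Prop :=
  (∃ i, (s i).subst σ = (m j₀).neg) ∧
    ∀ i, (s i).subst σ = (m j₀).neg ∨ ∃ j ≠ j₀, (s i).subst σ = m j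

section Indexed

variable {V : Type} {k n : ℕ} {s : Fin k → Lit V} {m : Fin n → Lit V}

theorem subRes_clauseOfFn_iff [DecidableEq V] (hm : NoDupIdx m) :
    SubRes (clauseOfFn s) (clauseOfFn m) ↔ ∃ σ j₀, ResolvesAt s m σ j₀ := by
  rw [subRes_iff_exists_subst]
  constructor
  · rintro ⟨σ, _, hm', ⟨_, hl, hi⟩, hS⟩
    obtain ⟨j₀, rfl⟩ := mem_clauseOfFn.1 hm'
    obtain ⟨i, rfl⟩ := mem_clauseOfFn.1 hl
    refine ⟨σ, j₀, ⟨i, hi⟩, fun i => ?_⟩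
    exact (hS _ (mem_clauseOfFn.2 ⟨i, rfl⟩)).imp_right (mem_erase_clauseOfFn_iff hm _ _).1
  · rintro ⟨σ, j₀, ⟨i, hi⟩, hS⟩
    refine ⟨σ, m j₀, mem_clauseOfFn.2 ⟨j₀, rfl⟩, ⟨s i, mem_clauseOfFn.2 ⟨i, rfl⟩, hi⟩,
      fun l hl => ?_⟩
    obtain ⟨i, rfl⟩ := mem_clauseOfFn.1 hl
    exact (hS i).imp_right (mem_erase_clauseOfFn_iff hm _ _).2

theorem indirectSRSat_iff {Sp Sn : Fin k → Fin n → Option (PSub V)}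
    (hSp : IsMatcherFamilyPos s m Sp) (hSn : IsMatcherFamilyNeg s m Sn) :
    IndirectSRSat s m Sp Sn ↔ ∃ σ j₀, ResolvesAt s m σ j₀ := by
  constructor
  · rintro ⟨σ, bp, bn, c, hpos, hneg, hstruct, ⟨j₀, hj₀⟩, huniq, hcomp, hcoh⟩
    have hbp i j (h : bp i j = true) := (hSp.compatible_iff i j).1 (hpos i j h)
    have hbn i j (h : bn i j = true) := (hSn.compatible_iff i j).1 (hneg i j h)
    have hbn_j₀ i j (h : bn i j = true) : j = j₀ := huniq j j₀ ((hstruct j).2 ⟨i, h⟩) hj₀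
    obtain ⟨i₀, hi₀⟩ := (hstruct j₀).1 hj₀
    refine ⟨σ, j₀, ⟨i₀, hbn i₀ j₀ hi₀⟩, fun i => ?_⟩
    obtain ⟨j, hj | hj⟩ := hcomp i
    · exact Or.inr ⟨j, fun h => hcoh i j ⟨h ▸ hj₀, hj⟩, hbp i j hj⟩
    · exact Or.inl (hbn_j₀ i j hj ▸ hbn i j hj)
  · classical
    rintro ⟨σ, j₀, ⟨i₀, hi₀⟩, hS⟩
    refine ⟨σ, fun i j => decide ((s i).subst σ = m j ∧ j ≠ j₀),
      fun i j => decide ((s i).subst σ = (m j).neg ∧ j = j₀), fun j => decide (j = j₀),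
      ?_, ?_, ?_, ⟨j₀, decide_eq_true rfl⟩, ?_, ?_, ?_⟩
    · intro i j h
      exact (hSp.compatible_iff i j).2 (of_decide_eq_true h).1
    · intro i j h
      exact (hSn.compatible_iff i j).2 (of_decide_eq_true h).1
    · intro j
      simp only [decide_eq_true_iff]
      exact ⟨by rintro rfl; exact ⟨i₀, hi₀, rfl⟩, fun ⟨_, _, h⟩ => h⟩
    · intro j j' hj hj'
      rw [of_decide_eq_true hj, of_decide_eq_true hj']
    · intro i
      simp only [decide_eq_true_iff]
      rcases hS i with h | ⟨j, hj, h⟩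
      · exact ⟨j₀, Or.inr ⟨h, rfl⟩⟩
      · exact ⟨j, Or.inl ⟨h, hj⟩⟩
    · rintro i j ⟨hc, hbp⟩
      exact (of_decide_eq_true hbp).2 (of_decide_eq_true hc)

end Indexed

/-- Soundness of the indirect SAT encoding: with `M` having no duplicate atoms,
`S`, `M` are side and main premises of subsumption resolution iff
`𝓔ⁱ_SR(S,M)` is satisfiable. -/
theorem stmt5 {V : Type} [DecidableEq V] {k n : ℕ} (s : Fin k → Lit V) (m : Fin n → Lit V)
    (hM : NoDupAtomsIdx m)
    (Sp Sn : Fin k → Fin n → Option (PSub V))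
    (hSp : IsMatcherFamilyPos s m Sp) (hSn : IsMatcherFamilyNeg s m Sn) :
    SubRes (clauseOfFn s) (clauseOfFn m) ↔ IndirectSRSat s m Sp Sn :=
  (subRes_clauseOfFn_iff hM.1).trans (indirectSRSat_iff hSp hSn).symm
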